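/- arXiv:2003.01676 — 2 statements merged into one kernel-verified Lean document; each statement's English description precedes it below -/
import Mathlib

section
/- For every positive integer n, the n×n Hankel determinant det( binom(2i+2j+2, i+j+1) + 2·binom(2i+2j+4, i+j+2) + binom(2i+2j+6, i+j+3) )_{i,j=0}^{n−1} equals 2^n · Σ_{j=0}^{n} L_{2j+1}². -/
/-- The Lucas numbers: `L_0 = 2`, `L_1 = 1`, `L_n = L_{n-1} + L_{n-2}`. -/
def lucas : ℕ → ℤ
  | 0 => 2
  | 1 => 1
  | n+2 => lucas (n+1) + lucas n

/-!
Splitting Vandermonde's convolution for `C(2A+2B+2, A+B+1)` at its middle term gives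
`C(2A+2B+2, A+B+1) = 2 ∑ₖ C(2A+1, A+1+k) C(2B+1, B+1+k)`, so the Hankel matrix is `2 X Xᵀ` for the
`n × (n+1)` matrix `X` with entries `C(2i+1, i+1+k) + C(2i+3, i+2+k)`. Deleting column `0` of `X`
leaves a unitriangular matrix, and `X` annihilates `w = ((-1)ᵏ L_{2k+1})ₖ`: by Pascal's rule the
next row of binomials arises from the previous one by the symmetric operator
`f ↦ f (k-1) + 2 f k + f (k+1)` (reflected at `k = 0`), and `w` is its eigenvector for `-1`.
For such an `X`, the matrix determinant lemma gives `det (X Xᵀ) = ∑ₖ wₖ²`.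
-/

open Finset Matrix

theorem Matrix.det_mul_transpose_of_mulVec_eq_zero {R : Type*} [CommRing R] {n : ℕ}
    (A : Matrix (Fin n) (Fin (n + 1)) R) {w : Fin (n + 1) → R} (hw : A *ᵥ w = 0)
    (hw₀ : w 0 = 1) :
    (A * Aᵀ).det = (A.submatrix id Fin.succ).det ^ 2 * ∑ k, w k ^ 2 := by
  set B := A.submatrix id Fin.succ
  set u := w ∘ Fin.succ
  have hcol : ∀ i, A i 0 = -(B *ᵥ u) i := fun i => by
    have := congrFun hw i
    simp only [mulVec, dotProduct, Fin.sum_univ_succ, hw₀, mul_one, Pi.zero_apply] at this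
    simp only [mulVec, dotProduct, B, u, submatrix_apply, id, Function.comp_apply]
    linear_combination this
  have hfac : A * Aᵀ = B * (1 + vecMulVec u u) * Bᵀ := by
    rw [Matrix.mul_add, Matrix.mul_one, Matrix.add_mul, mul_vecMulVec, vecMulVec_mul,
      vecMul_transpose]
    ext i j
    simp only [mul_apply, transpose_apply, Fin.sum_univ_succ, add_apply, vecMulVec_apply, hcol]
    simp only [mul_neg, neg_mul, neg_neg, submatrix_apply, id_eq, B]
    ring
  rw [hfac, det_mul, det_mul, det_transpose, vecMulVec_eq Unit,
    det_one_add_replicateCol_mul_replicateRow, Fin.sum_univ_succ, hw₀]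
  simp only [dotProduct, u, Function.comp_apply, ← sq]
  ring

theorem Nat.choose_add_two_add_two (m r : ℕ) :
    (m + 2).choose (r + 2) = m.choose r + 2 * m.choose (r + 1) + m.choose (r + 2) := by
  rw [Nat.choose_succ_succ, Nat.choose_succ_succ, Nat.choose_succ_succ m (r + 1)]
  ring

def tailChoose (A k : ℕ) : ℕ := (2 * A + 1).choose (A + 1 + k)

lemma tailChoose_eq_zero {A k : ℕ} (h : A < k) : tailChoose A k = 0 :=
  Nat.choose_eq_zero_of_lt (by omega)

lemma tailChoose_self (A : ℕ) : tailChoose A A = 1 := by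
  rw [tailChoose, show A + 1 + A = 2 * A + 1 by omega, Nat.choose_self]

lemma tailChoose_eq_choose_sub {A k : ℕ} (h : k ≤ A) :
    tailChoose A k = (2 * A + 1).choose (A - k) := by
  rw [tailChoose, ← Nat.choose_symm (by omega)]
  congr 1
  omega

lemma tailChoose_succ_zero (A : ℕ) :
    tailChoose (A + 1) 0 = 3 * tailChoose A 0 + tailChoose A 1 := by
  have h := Nat.choose_add_two_add_two (2 * A + 1) A
  rw [← Nat.choose_symm_half] at h
  simp only [tailChoose]
  rw [show 2 * (A + 1) + 1 = 2 * A + 1 + 2 by ring, show A + 1 + 1 + 0 = A + 2 by ring, h]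
  ring_nf

lemma tailChoose_succ_succ (A k : ℕ) :
    tailChoose (A + 1) (k + 1)
      = tailChoose A k + 2 * tailChoose A (k + 1) + tailChoose A (k + 2) := by
  simp only [tailChoose]
  rw [show 2 * (A + 1) + 1 = 2 * A + 1 + 2 by ring,
    show A + 1 + 1 + (k + 1) = A + 1 + k + 2 by ring, Nat.choose_add_two_add_two]
  ring_nf

lemma sum_range_tailChoose_mul {A N : ℕ} (h : A < N) (f : ℕ → ℕ) :
    ∑ k ∈ range N, tailChoose A k * f k = ∑ k ∈ range (A + 1), tailChoose A k * f k :=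
  (sum_subset (range_subset_range.2 h) fun k _ hk => by
    rw [tailChoose_eq_zero (by simpa using hk), zero_mul]).symm

lemma two_mul_sum_tailChoose_mul_tailChoose {A B N : ℕ} (hA : A < N) (hB : B < N) :
    2 * ∑ k ∈ range N, tailChoose A k * tailChoose B k
      = (2 * A + 2 * B + 2).choose (A + B + 1) := by
  have hB' := sum_range_tailChoose_mul hB (tailChoose A)
  simp only [mul_comm (tailChoose B _)] at hB'
  symm
  calc (2 * A + 2 * B + 2).choose (A + B + 1)
      = ∑ i ∈ range (A + 1 + (B + 1)),
          (2 * A + 1).choose i * (2 * B + 1).choose (A + B + 1 - i) := by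
        rw [show 2 * A + 2 * B + 2 = 2 * A + 1 + (2 * B + 1) by ring, Nat.add_choose_eq,
          Nat.sum_antidiagonal_eq_sum_range_succ
            (fun i j => (2 * A + 1).choose i * (2 * B + 1).choose j),
          show A + 1 + (B + 1) = A + B + 1 + 1 by ring]
    _ = ∑ k ∈ range (A + 1), tailChoose A k * tailChoose B k
          + ∑ k ∈ range (B + 1), tailChoose A k * tailChoose B k := by
        rw [sum_range_add, ← sum_range_reflect]
        congr 1 <;> refine sum_congr rfl fun k hk => ?_ <;> rw [mem_range] at hk
        · rw [tailChoose_eq_choose_sub (by omega), tailChoose]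
          congr 2; omega
        · rw [tailChoose_eq_choose_sub (A := B) (by omega), tailChoose]
          congr 2; omega
    _ = 2 * ∑ k ∈ range N, tailChoose A k * tailChoose B k := by
        rw [← sum_range_tailChoose_mul hA, hB']
        ring

lemma two_mul_sum_range_tailChoose_add_mul {i j N : ℕ} (hi : i + 1 < N) (hj : j + 1 < N) :
    2 * ∑ k ∈ range N,
        (tailChoose i k + tailChoose (i + 1) k) * (tailChoose j k + tailChoose (j + 1) k)
      = (2 * i + 2 * j + 2).choose (i + j + 1) + 2 * (2 * i + 2 * j + 4).choose (i + j + 2)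
          + (2 * i + 2 * j + 6).choose (i + j + 3) := by
  simp only [add_mul, mul_add, sum_add_distrib]
  rw [two_mul_sum_tailChoose_mul_tailChoose (by omega) (by omega),
    two_mul_sum_tailChoose_mul_tailChoose (A := i) (B := j + 1) (by omega) (by omega),
    two_mul_sum_tailChoose_mul_tailChoose (A := i + 1) (B := j) (by omega) (by omega),
    two_mul_sum_tailChoose_mul_tailChoose (A := i + 1) (B := j + 1) (by omega) (by omega)]
  ring_nf

lemma lucas_add_four (m : ℕ) : lucas (m + 4) = 3 * lucas (m + 2) - lucas m := by
  simp only [lucas]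
  ring

def altLucas (k : ℕ) : ℤ := (-1) ^ k * lucas (2 * k + 1)

lemma altLucas_zero : altLucas 0 = 1 := rfl

lemma altLucas_one : altLucas 1 = -4 := rfl

lemma altLucas_add_two (k : ℕ) : altLucas (k + 2) = -3 * altLucas (k + 1) - altLucas k := by
  simp only [altLucas, show 2 * (k + 2) + 1 = 2 * k + 1 + 4 by ring,
    show 2 * (k + 1) + 1 = 2 * k + 1 + 2 by ring, lucas_add_four, pow_succ]
  ring

lemma sum_range_tailChoose_add_mul_altLucas {A M : ℕ} (h : A < M) :
    ∑ k ∈ range (M + 1), ((tailChoose A k + tailChoose (A + 1) k : ℕ) : ℤ) * altLucas k = 0 := by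
  -- the discrete Wronskian of the row `tailChoose A` and `altLucas`: the sum telescopes
  set W : ℕ → ℤ := fun k => tailChoose A k * altLucas (k + 1) - tailChoose A (k + 1) * altLucas k
  have step : ∀ k, ((tailChoose A (k + 1) + tailChoose (A + 1) (k + 1) : ℕ) : ℤ)
      * altLucas (k + 1) = W k - W (k + 1) := fun k => by
    simp only [W, tailChoose_succ_succ, altLucas_add_two]
    push_cast
    ring
  have base : ((tailChoose A 0 + tailChoose (A + 1) 0 : ℕ) : ℤ) * altLucas 0 = -W 0 := by
    simp only [W, zero_add, tailChoose_succ_zero, altLucas_zero, altLucas_one]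
    push_cast
    ring
  rw [sum_range_succ', sum_congr rfl fun k _ => step k, sum_range_sub', base]
  simp [W, tailChoose_eq_zero h, tailChoose_eq_zero (h.trans (Nat.lt_succ_self M))]

def hankelFactor (n : ℕ) : Matrix (Fin n) (Fin (n + 1)) ℤ :=
  of fun i k => ((tailChoose i k + tailChoose (i + 1) k : ℕ) : ℤ)

lemma two_smul_hankelFactor_mul_transpose (n : ℕ) :
    (2 : ℤ) • (hankelFactor n * (hankelFactor n)ᵀ) = of fun i j : Fin n =>
        (Nat.choose (2 * (i : ℕ) + 2 * (j : ℕ) + 2) ((i : ℕ) + (j : ℕ) + 1) : ℤ)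
          + 2 * (Nat.choose (2 * (i : ℕ) + 2 * (j : ℕ) + 4) ((i : ℕ) + (j : ℕ) + 2) : ℤ)
          + (Nat.choose (2 * (i : ℕ) + 2 * (j : ℕ) + 6) ((i : ℕ) + (j : ℕ) + 3) : ℤ) := by
  ext i j
  have h := two_mul_sum_range_tailChoose_add_mul (N := n + 1) (by omega : (i : ℕ) + 1 < n + 1)
    (by omega : (j : ℕ) + 1 < n + 1)
  simp only [Matrix.smul_apply, mul_apply, transpose_apply, hankelFactor, of_apply, smul_eq_mul]
  rw [Fin.sum_univ_eq_sum_range (fun k => ((tailChoose i k + tailChoose (i + 1) k : ℕ) : ℤ)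
    * ((tailChoose j k + tailChoose (j + 1) k : ℕ) : ℤ))]
  exact_mod_cast h

lemma hankelFactor_mulVec_altLucas (n : ℕ) : hankelFactor n *ᵥ (fun k => altLucas k) = 0 := by
  ext i
  simp only [mulVec, dotProduct, hankelFactor, of_apply]
  rw [Fin.sum_univ_eq_sum_range (fun k =>
    ((tailChoose i k + tailChoose (i + 1) k : ℕ) : ℤ) * altLucas k)]
  exact sum_range_tailChoose_add_mul_altLucas i.isLt

lemma det_hankelFactor_submatrix_succ (n : ℕ) :
    ((hankelFactor n).submatrix id Fin.succ).det = 1 := by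
  rw [det_of_isLowerTriangular _ fun i k (h : i < k) => by
    simp [hankelFactor, tailChoose_eq_zero (show (i : ℕ) < k + 1 by omega),
      tailChoose_eq_zero (show (i : ℕ) + 1 < k + 1 by omega)]]
  refine prod_eq_one fun i _ => ?_
  simp [hankelFactor, tailChoose_eq_zero (Nat.lt_succ_self i), tailChoose_self]

theorem hankel_central_binomial_eq_sum_lucas_sq_general (n : ℕ) :
    Matrix.det (Matrix.of fun i j : Fin n =>
        (Nat.choose (2 * (i : ℕ) + 2 * (j : ℕ) + 2) ((i : ℕ) + (j : ℕ) + 1) : ℤ)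
          + 2 * (Nat.choose (2 * (i : ℕ) + 2 * (j : ℕ) + 4) ((i : ℕ) + (j : ℕ) + 2) : ℤ)
          + (Nat.choose (2 * (i : ℕ) + 2 * (j : ℕ) + 6) ((i : ℕ) + (j : ℕ) + 3) : ℤ))
      = 2 ^ n * ∑ j ∈ Finset.range (n + 1), lucas (2 * j + 1) ^ 2 := by
  rw [← two_smul_hankelFactor_mul_transpose, det_smul, Fintype.card_fin,
    det_mul_transpose_of_mulVec_eq_zero _ (hankelFactor_mulVec_altLucas n) altLucas_zero,
    det_hankelFactor_submatrix_succ, Fin.sum_univ_eq_sum_range (fun k => altLucas k ^ 2)]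
  simp [altLucas, mul_pow, ← pow_mul']

/-- Eq. (1.4): for `n ≥ 1`,
`det(binom(2i+2j+2,i+j+1) + 2 binom(2i+2j+4,i+j+2) + binom(2i+2j+6,i+j+3))_{i,j=0}^{n-1}
  = 2^n ∑_{j=0}^{n} L_{2j+1}²`. -/
theorem hankel_central_binomial_eq_sum_lucas_sq (n : ℕ) (hn : 0 < n) :
    Matrix.det (Matrix.of fun i j : Fin n =>
        (Nat.choose (2 * (i : ℕ) + 2 * (j : ℕ) + 2) ((i : ℕ) + (j : ℕ) + 1) : ℤ)
          + 2 * (Nat.choose (2 * (i : ℕ) + 2 * (j : ℕ) + 4) ((i : ℕ) + (j : ℕ) + 2) : ℤ)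
          + (Nat.choose (2 * (i : ℕ) + 2 * (j : ℕ) + 6) ((i : ℕ) + (j : ℕ) + 3) : ℤ))
      = 2 ^ n * ∑ j ∈ Finset.range (n + 1), lucas (2 * j + 1) ^ 2 :=
  hankel_central_binomial_eq_sum_lucas_sq_general n
end

section
/- For every positive integer n, the n×n Hankel determinant det(M_{i+j} + 2·M_{i+j+1} + M_{i+j+2})_{i,j=0}^{n−1} equals Σ_{j=0}^{n} (j+1)² = (n+1)(n+2)(2n+3)/6; equivalently, 6 times this determinant equals (n+1)(n+2)(2n+3). -/
def ballot : ℕ → ℕ → ℕ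
  | 0, _ => 1
  | (j+1), 0 => ballot j 1
  | (j+1), (k+1) => ballot (j+1) k + ballot j (k+2)
  termination_by j k => (j, k)

lemma ballot_zero' (k : ℕ) : ballot 0 k = 1 := by simp [ballot]
lemma ballot_succ_zero (j : ℕ) : ballot (j+1) 0 = ballot j 1 := by simp [ballot]
lemma ballot_succ_succ (j k : ℕ) : ballot (j+1) (k+1) = ballot (j+1) k + ballot j (k+2) := by
  rw [ballot]

lemma ballot_identity : ∀ j k : ℕ, (k+1) * Nat.choose (2*j+k) j = (j+k+1) * ballot j k := by
  intro j
  induction j with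
  | zero => intro k; simp [ballot_zero']
  | succ j ih =>
    intro k
    induction k with
    | zero =>
      have h1 := ih 1
      have hpas : Nat.choose (2*(j+1)+0) (j+1)
          = Nat.choose (2*j+1) j + Nat.choose (2*j+1) (j+1) := by
        have h : 2*(j+1)+0 = (2*j+1)+1 := by ring
        rw [h, Nat.choose_succ_succ']
      have hsym : Nat.choose (2*j+1) (j+1) = Nat.choose (2*j+1) j := by
        have := Nat.choose_symm (n := 2*j+1) (k := j+1) (by omega)
        simpa [show 2*j+1-(j+1) = j by omega] using this.symm
      rw [ballot_succ_zero]
      have : Nat.choose (2*(j+1)+0) (j+1) = 2 * Nat.choose (2*j+1) j := by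
        rw [hpas, hsym]; ring
      calc (0+1) * Nat.choose (2*(j+1)+0) (j+1) = 2 * Nat.choose (2*j+1) j := by
            rw [this]; ring
        _ = (j+1+1) * ballot j 1 := by simpa using h1
        _ = (j+1+0+1) * ballot j 1 := by ring_nf
    | succ k ihk =>
      have hb := ballot_succ_succ j k
      have ih2 := ih (k+2)
      have hpas : Nat.choose (2*(j+1)+(k+1)) (j+1)
          = Nat.choose (2*j+k+2) j + Nat.choose (2*j+k+2) (j+1) := by
        have h : 2*(j+1)+(k+1) = (2*j+k+2)+1 := by ring
        rw [h, Nat.choose_succ_succ]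
      have hrel : Nat.choose (2*j+k+2) (j+1) * (j+1) = Nat.choose (2*j+k+2) j * (j+k+2) := by
        have h := Nat.choose_succ_right_eq (2*j+k+2) j
        rw [h]
        congr 1
        omega
      have ihk' : ((k:ℤ)+1) * (Nat.choose (2*(j+1)+k) (j+1) : ℤ)
          = ((j:ℤ)+1+k+1) * (ballot (j+1) k : ℤ) := by exact_mod_cast ihk
      have ih2' : ((k:ℤ)+3) * (Nat.choose (2*j+(k+2)) j : ℤ)
          = ((j:ℤ)+k+3) * (ballot j (k+2) : ℤ) := by exact_mod_cast ih (k+2)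
      have hrel' : (Nat.choose (2*j+k+2) (j+1) : ℤ) * ((j:ℤ)+1)
          = (Nat.choose (2*j+k+2) j : ℤ) * ((j:ℤ)+k+2) := by exact_mod_cast hrel
      have hpas' : (Nat.choose (2*(j+1)+(k+1)) (j+1) : ℤ)
          = (Nat.choose (2*j+k+2) j : ℤ) + (Nat.choose (2*j+k+2) (j+1) : ℤ) := by
        exact_mod_cast hpas
      have hb' : (ballot (j+1) (k+1) : ℤ) = (ballot (j+1) k : ℤ) + (ballot j (k+2) : ℤ) := by
        exact_mod_cast hb
      have hidx1 : 2*(j+1)+k = 2*j+k+2 := by ring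
      have hidx2 : 2*j+(k+2) = 2*j+k+2 := by ring
      rw [hidx1] at ihk'
      rw [hidx2] at ih2'
      have H : ((j:ℤ)+k+2) * (((k:ℤ)+1+1) * (Nat.choose (2*(j+1)+(k+1)) (j+1) : ℤ))
          = ((j:ℤ)+k+2) * (((j:ℤ)+1+(k+1)+1) * (ballot (j+1) (k+1) : ℤ)) := by
        rw [hb', hpas']
        push_cast
        linear_combination ((j:ℤ)+k+3)*ihk' + ((j:ℤ)+k+2)*ih2' + hrel'
      have H2 := mul_left_cancel₀ (show ((j:ℤ)+k+2) ≠ 0 by positivity) H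
      exact_mod_cast H2

lemma ballot_zero_eq_catalan (j : ℕ) : ballot j 0 = catalan j := by
  have h := ballot_identity j 0
  have h2 : Nat.choose (2*j) j = (j+1) * ballot j 0 := by simpa using h
  have h3 : (j+1) * catalan j = Nat.choose (2*j) j := by
    have := succ_mul_catalan_eq_centralBinom j
    rwa [Nat.centralBinom] at this
  have key : (j+1) * ballot j 0 = (j+1) * catalan j := by omega
  exact Nat.eq_of_mul_eq_mul_left (by omega) key


/-- The Motzkin numbers `M_n = ∑_{k=0}^{⌊n/2⌋} binom(n,2k) C_k`. -/
def motzkin (n : ℕ) : ℕ :=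
  ∑ k ∈ Finset.range (n / 2 + 1), Nat.choose n (2 * k) * catalan k

/-- The Motzkin triangle. -/
def mtri (n k : ℕ) : ℕ := ∑ j ∈ Finset.range (n+1), Nat.choose n (k+2*j) * ballot j k

lemma mt_eq_zero {n k : ℕ} (h : n < k) : mtri n k = 0 := by
  unfold mtri
  apply Finset.sum_eq_zero
  intro j _
  have : n < k + 2*j := by omega
  rw [Nat.choose_eq_zero_of_lt this, zero_mul]

lemma mt_diag (n : ℕ) : mtri n n = 1 := by
  unfold mtri
  rw [Finset.sum_eq_single 0]
  · simp [ballot_zero']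
  · intro j _ hj
    rw [Nat.choose_eq_zero_of_lt (by omega), zero_mul]
  · intro h; simp at h

lemma mt_zero_eq_motzkin (n : ℕ) (hb : ∀ j, ballot j 0 = catalan j) : mtri n 0 = motzkin n := by
  unfold mtri motzkin
  rw [← Finset.sum_subset (Finset.range_subset_range.mpr (show n/2+1 ≤ n+1 by omega))]
  · apply Finset.sum_congr rfl
    intro j _
    rw [hb j, zero_add, Nat.mul_comm 2 j]
  · intro j _ hj
    simp only [Finset.mem_range] at hj ⊢
    rw [Nat.choose_eq_zero_of_lt (by omega), zero_mul]

lemma mt_rec_zero (n : ℕ) : mtri (n+1) 0 = mtri n 0 + mtri n 1 := by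
  unfold mtri
  -- split off j=0 from LHS
  rw [Finset.sum_range_succ' (fun j => Nat.choose (n+1) (0+2*j) * ballot j 0)]
  simp only [Nat.mul_zero, Nat.add_zero, Nat.choose_zero_right, Nat.one_mul]
  -- LHS = ∑_{i<n+1} choose (n+1) (2(i+1)) * ballot (i+1) 0 + ballot 0 0
  have step : ∀ i, Nat.choose (n+1) (0+2*(i+1)) * ballot (i+1) 0
      = Nat.choose n (1+2*i) * ballot i 1 + Nat.choose n (0+2*(i+1)) * ballot (i+1) 0 := by
    intro i
    have h : 0+2*(i+1) = (1+2*i)+1 := by ring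
    rw [h, Nat.choose_succ_succ, ballot_succ_zero, add_mul]
  rw [Finset.sum_congr rfl (fun i _ => step i), Finset.sum_add_distrib]
  -- now: (∑_{i<n+1} choose n (1+2i) ballot i 1) + (∑_{i<n+1} choose n (2(i+1)) ballot (i+1) 0) + 1
  -- RHS: mtri n 0 + mtri n 1
  rw [Finset.sum_range_succ' (fun j => Nat.choose n (0+2*j) * ballot j 0)]
  simp only [ballot_zero', Nat.mul_zero, Nat.add_zero, Nat.choose_zero_right, Nat.one_mul,
    Nat.mul_one]
  -- drop the extra top term in ∑_{i<n+1} choose n (2(i+1)) * ballot (i+1) 0 : at i = n it's 0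
  rw [Finset.sum_range_succ (fun i => Nat.choose n (0+2*(i+1)) * ballot (i+1) 0)]
  rw [Nat.choose_eq_zero_of_lt (by omega), zero_mul, add_zero]
  ring

lemma mt_rec (n k : ℕ) : mtri (n+1) (k+1) = mtri n k + mtri n (k+1) + mtri n (k+2) := by
  unfold mtri
  have pascal : ∀ j, Nat.choose (n+1) ((k+1)+2*j) * ballot j (k+1)
      = Nat.choose n (k+2*j) * ballot j (k+1) + Nat.choose n ((k+1)+2*j) * ballot j (k+1) := by
    intro j
    have h : (k+1)+2*j = (k+2*j)+1 := by ring
    rw [h, Nat.choose_succ_succ, add_mul]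
  rw [Finset.sum_congr rfl (fun j _ => pascal j), Finset.sum_add_distrib]
  rw [Finset.sum_range_succ (fun j => Nat.choose n ((k+1)+2*j) * ballot j (k+1)),
      Nat.choose_eq_zero_of_lt (by omega), zero_mul, add_zero]
  rw [Finset.sum_range_succ' (fun j => Nat.choose n (k+2*j) * ballot j (k+1))]
  have split : ∀ i, Nat.choose n (k+2*(i+1)) * ballot (i+1) (k+1)
      = Nat.choose n (k+2*(i+1)) * ballot (i+1) k + Nat.choose n ((k+2)+2*i) * ballot i (k+2) := by
    intro i
    have h : k+2*(i+1) = (k+2)+2*i := by ring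
    rw [ballot_succ_succ, mul_add, h]
  rw [Finset.sum_congr rfl (fun i _ => split i), Finset.sum_add_distrib]
  have A : ∑ j ∈ Finset.range (n+2), Nat.choose n (k+2*j) * ballot j k
      = ∑ j ∈ Finset.range (n+1), Nat.choose n (k+2*j) * ballot j k := by
    rw [Finset.sum_range_succ, Nat.choose_eq_zero_of_lt (by omega), zero_mul, add_zero]
  have B : ∑ j ∈ Finset.range (n+2), Nat.choose n (k+2*j) * ballot j k
      = (∑ i ∈ Finset.range (n+1), Nat.choose n (k+2*(i+1)) * ballot (i+1) k)
        + Nat.choose n (k+2*0) * ballot 0 k := by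
    exact Finset.sum_range_succ' (fun j => Nat.choose n (k+2*j) * ballot j k) (n+1)
  simp only [ballot_zero'] at *
  omega

lemma sum_drop {f : ℕ → ℤ} {M N : ℕ} (h : M ≤ N) (h0 : ∀ k, M ≤ k → f k = 0) :
    ∑ k ∈ Finset.range N, f k = ∑ k ∈ Finset.range M, f k := by
  refine (Finset.sum_subset (Finset.range_subset_range.mpr h) ?_).symm
  intro x hx hnx
  simp only [Finset.mem_range] at hx hnx
  exact h0 x (by omega)

lemma TT_swap (i j : ℕ) :
    ∑ k ∈ Finset.range (i+j+2), (mtri (i+1) k : ℤ) * mtri j k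
      = ∑ k ∈ Finset.range (i+j+2), (mtri i k : ℤ) * mtri (j+1) k := by
  have key : ∑ k ∈ Finset.range (i+j+2),
      ((mtri (i+1) k : ℤ) * mtri j k - (mtri i k : ℤ) * mtri (j+1) k) = 0 := by
    set g : ℕ → ℤ := fun k => (mtri i k : ℤ) * mtri j (k+1) - (mtri i (k+1) : ℤ) * mtri j k with hg
    have hpt : ∀ k, (mtri (i+1) (k+1) : ℤ) * mtri j (k+1) - (mtri i (k+1) : ℤ) * mtri (j+1) (k+1)
        = g k - g (k+1) := by
      intro k
      have h1 := mt_rec i k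
      have h2 := mt_rec j k
      simp only [hg]
      push_cast [h1, h2]
      ring
    have h0 : (mtri (i+1) 0 : ℤ) * mtri j 0 - (mtri i 0 : ℤ) * mtri (j+1) 0 = -(g 0) := by
      have h1 := mt_rec_zero i
      have h2 := mt_rec_zero j
      simp only [hg]
      push_cast [h1, h2]
      ring
    rw [Finset.sum_range_succ'
        (fun k => (mtri (i+1) k : ℤ) * mtri j k - (mtri i k : ℤ) * mtri (j+1) k) (i+j+1)]
    rw [Finset.sum_congr rfl (fun k _ => hpt k), h0, Finset.sum_range_sub' g (i+j+1)]
    have z1 : mtri i (i+j+1) = 0 := mt_eq_zero (by omega)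
    have z2 : mtri i (i+j+1+1) = 0 := mt_eq_zero (by omega)
    simp only [hg, z1, z2]
    push_cast
    ring
  have := Finset.sum_sub_distrib (s := Finset.range (i+j+2))
    (f := fun k => (mtri (i+1) k : ℤ) * mtri j k) (g := fun k => (mtri i k : ℤ) * mtri (j+1) k)
  rw [this] at key
  linarith [key]

lemma TT_sum : ∀ i j : ℕ, ∑ k ∈ Finset.range (i+j+1), (mtri i k : ℤ) * mtri j k
    = (motzkin (i+j) : ℤ) := by
  intro i
  induction i with
  | zero =>
    intro j
    rw [Finset.sum_eq_single 0]
    · rw [← mt_zero_eq_motzkin _ ballot_zero_eq_catalan, mt_diag]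
      push_cast
      ring
    · intro k _ hk
      have : mtri 0 k = 0 := mt_eq_zero (by omega)
      rw [this]
      push_cast
      ring
    · intro h; simp at h
  | succ i ih =>
    intro j
    have h1 : i+1+j+1 = i+j+2 := by omega
    rw [h1, TT_swap i j]
    have h2 : i+j+2 = i+(j+1)+1 := by omega
    rw [h2, ih (j+1)]
    have h3 : i+(j+1) = i+1+j := by omega
    rw [h3]

/-- `wz i k = T i k + T (i+1) k`, the bidiagonal-times-triangle matrix. -/
def wz (i k : ℕ) : ℤ := (mtri i k : ℤ) + (mtri (i+1) k : ℤ)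

lemma wz_eq_zero {i k : ℕ} (h : i+1 < k) : wz i k = 0 := by
  unfold wz
  rw [mt_eq_zero (by omega), mt_eq_zero (by omega)]
  norm_num

lemma TT_sum' (i j N : ℕ) (h : i+j+1 ≤ N) :
    ∑ k ∈ Finset.range N, (mtri i k : ℤ) * mtri j k = (motzkin (i+j) : ℤ) := by
  rw [sum_drop h, TT_sum]
  intro k hk
  rw [mt_eq_zero (show i < k by omega)]
  push_cast; ring

lemma W_sum (i j N : ℕ) (hN : i+j+3 ≤ N) :
    ∑ k ∈ Finset.range N, wz i k * wz j k
      = (motzkin (i+j) : ℤ) + 2 * (motzkin (i+j+1) : ℤ) + (motzkin (i+j+2) : ℤ) := by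
  unfold wz
  have expand : ∀ k, ((mtri i k : ℤ) + mtri (i+1) k) * ((mtri j k : ℤ) + mtri (j+1) k)
      = (mtri i k : ℤ) * mtri j k + (mtri i k : ℤ) * mtri (j+1) k
        + (mtri (i+1) k : ℤ) * mtri j k + (mtri (i+1) k : ℤ) * mtri (j+1) k := by
    intro k; ring
  rw [Finset.sum_congr rfl (fun k _ => expand k)]
  rw [Finset.sum_add_distrib, Finset.sum_add_distrib, Finset.sum_add_distrib]
  rw [TT_sum' i j N (by omega), TT_sum' i (j+1) N (by omega),
      TT_sum' (i+1) j N (by omega), TT_sum' (i+1) (j+1) N (by omega)]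
  have e1 : i+(j+1) = i+j+1 := by omega
  have e2 : i+1+j = i+j+1 := by omega
  have e3 : i+1+(j+1) = i+j+2 := by omega
  rw [e1, e2, e3]
  ring

lemma altD (m : ℕ) : ∑ k ∈ Finset.range (m+2),
    (-1:ℤ)^k * ((k:ℤ)+1) * ((mtri (m+1) k : ℤ) + (mtri m k : ℤ)) = 0 := by
  set h : ℕ → ℤ := fun k => (mtri m k : ℤ) + (mtri m (k+1) : ℤ) with hh
  set F : ℕ → ℤ := fun k => (-1:ℤ)^k * ((k:ℤ)+1) * h k with hF
  set g : ℕ → ℤ := fun k => (-1:ℤ)^(k+1) * (mtri m k : ℤ) with hg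
  rw [Finset.sum_range_succ' _ (m+1)]
  have hpt : ∀ k, (-1:ℤ)^(k+1) * (((k:ℕ)+1:ℕ):ℤ)+1 = 0 → True := fun _ _ => trivial
  have step : ∀ k, (-1:ℤ)^(k+1) * ((((k+1):ℕ):ℤ)+1) * ((mtri (m+1) (k+1) : ℤ) + (mtri m (k+1) : ℤ))
      = ((-1:ℤ)^(k+1) * ((k:ℤ)+2) * h k + F (k+1)) := by
    intro k
    simp only [hh, hF]
    push_cast [mt_rec m k]
    ring
  rw [Finset.sum_congr rfl (fun k _ => step k), Finset.sum_add_distrib]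
  have hFshift : ∑ k ∈ Finset.range (m+1), F (k+1)
      = ∑ k ∈ Finset.range (m+1), F k + F (m+1) - F 0 := by
    have e1 : ∑ k ∈ Finset.range (m+2), F k
        = ∑ k ∈ Finset.range (m+1), F (k+1) + F 0 := Finset.sum_range_succ' F (m+1)
    have e2 : ∑ k ∈ Finset.range (m+2), F k
        = ∑ k ∈ Finset.range (m+1), F k + F (m+1) := Finset.sum_range_succ F (m+1)
    omega
  rw [hFshift]
  have hF1 : F (m+1) = 0 := by
    simp only [hF, hh]
    rw [mt_eq_zero (show m < m+1 by omega), mt_eq_zero (show m < m+1+1 by omega)]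
    push_cast; ring
  have hcomb : ∑ k ∈ Finset.range (m+1), ((-1:ℤ)^(k+1) * ((k:ℤ)+2) * h k)
      + ∑ k ∈ Finset.range (m+1), F k
      = ∑ k ∈ Finset.range (m+1), (g k - g (k+1)) := by
    rw [← Finset.sum_add_distrib]
    apply Finset.sum_congr rfl
    intro k _
    simp only [hF, hh, hg]
    push_cast
    ring
  have htel : ∑ k ∈ Finset.range (m+1), (g k - g (k+1)) = g 0 - g (m+1) :=
    Finset.sum_range_sub' g (m+1)
  have hgm : g (m+1) = 0 := by
    simp only [hg]
    rw [mt_eq_zero (show m < m+1 by omega)]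
    ring
  have h00 : (-1:ℤ)^0 * ((0:ℕ):ℤ)+1 = 0 ∨ True := Or.inr trivial
  -- term at zero
  have hz : (-1:ℤ)^0 * (((0:ℕ):ℤ)+1) * ((mtri (m+1) 0 : ℤ) + (mtri m 0 : ℤ))
      = 2*(mtri m 0 : ℤ) + (mtri m 1 : ℤ) := by
    push_cast [mt_rec_zero m]
    ring
  rw [hz]
  have : ∑ k ∈ Finset.range (m+1), ((-1:ℤ)^(k+1) * ((k:ℤ)+2) * h k)
      + (∑ k ∈ Finset.range (m+1), F k + F (m+1) - F 0)
      = (g 0 - g (m+1)) + F (m+1) - F 0 := by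
    rw [← htel, ← hcomb]; ring
  rw [this, hgm, hF1]
  simp only [hg, hF, hh]
  push_cast
  ring

lemma altT : ∀ m : ℕ, ∑ k ∈ Finset.range (m+1), (-1:ℤ)^k * ((k:ℤ)+1) * (mtri m k : ℤ)
    = (-1:ℤ)^m := by
  intro m
  induction m with
  | zero => simp [mt_diag 0]
  | succ m ih =>
    have hD := altD m
    have hsplit : ∑ k ∈ Finset.range (m+2),
        (-1:ℤ)^k * ((k:ℤ)+1) * ((mtri (m+1) k : ℤ) + (mtri m k : ℤ))
        = ∑ k ∈ Finset.range (m+2), (-1:ℤ)^k * ((k:ℤ)+1) * (mtri (m+1) k : ℤ)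
          + ∑ k ∈ Finset.range (m+2), (-1:ℤ)^k * ((k:ℤ)+1) * (mtri m k : ℤ) := by
      rw [← Finset.sum_add_distrib]
      apply Finset.sum_congr rfl
      intro k _
      ring
    have hdrop : ∑ k ∈ Finset.range (m+2), (-1:ℤ)^k * ((k:ℤ)+1) * (mtri m k : ℤ)
        = ∑ k ∈ Finset.range (m+1), (-1:ℤ)^k * ((k:ℤ)+1) * (mtri m k : ℤ) := by
      rw [Finset.sum_range_succ, mt_eq_zero (show m < m+1 by omega)]
      push_cast
      ring
    rw [hsplit, hdrop, ih] at hD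
    have : ∑ k ∈ Finset.range (m+2), (-1:ℤ)^k * ((k:ℤ)+1) * (mtri (m+1) k : ℤ)
        = -(-1:ℤ)^m := by linarith
    rw [this]
    ring

lemma altW (i N : ℕ) (h : i+2 ≤ N) :
    ∑ k ∈ Finset.range N, wz i k * ((-1:ℤ)^k * ((k:ℤ)+1)) = 0 := by
  rw [sum_drop h (fun k hk => by rw [wz_eq_zero (show i+1 < k by omega), zero_mul])]
  have expand : ∀ k, wz i k * ((-1:ℤ)^k * ((k:ℤ)+1))
      = (-1:ℤ)^k * ((k:ℤ)+1) * (mtri i k : ℤ) + (-1:ℤ)^k * ((k:ℤ)+1) * (mtri (i+1) k : ℤ) := by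
    intro k; unfold wz; ring
  rw [Finset.sum_congr rfl (fun k _ => expand k), Finset.sum_add_distrib]
  have h1 : ∑ k ∈ Finset.range (i+2), (-1:ℤ)^k * ((k:ℤ)+1) * (mtri i k : ℤ)
      = (-1:ℤ)^i := by
    rw [Finset.sum_range_succ, mt_eq_zero (show i < i+1 by omega)]
    push_cast
    rw [altT i]
    ring
  rw [h1, altT (i+1)]
  ring

/-- The truncated Hessenberg matrix whose determinant is `s+1`. -/
def Hmat (s : ℕ) : Matrix (Fin s) (Fin s) ℤ := Matrix.of fun i k => wz i k

lemma detH : ∀ s : ℕ, (Hmat s).det = (s:ℤ)+1 := by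
  intro s
  induction s with
  | zero => simp [Matrix.det_fin_zero]
  | succ s ih =>
    set A := Hmat (s+1) with hA
    set u : Fin (s+1) → ℤ := fun k => (-1:ℤ)^(k:ℕ) * (((k:ℕ):ℤ)+1) with hu
    have hmv : A.mulVec u = Pi.single (Fin.last s) ((-1:ℤ)^s * ((s:ℤ)+2)) := by
      funext i
      rw [Matrix.mulVec]
      show ∑ k : Fin (s+1), A i k * u k = _
      have : ∑ k : Fin (s+1), A i k * u k
          = ∑ k ∈ Finset.range (s+1), wz i k * ((-1:ℤ)^k * ((k:ℤ)+1)) := by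
        rw [← Fin.sum_univ_eq_sum_range (fun k => wz i k * ((-1:ℤ)^k * ((k:ℤ)+1))) (s+1)]
        exact Finset.sum_congr rfl (fun k _ => rfl)
      rw [this]
      by_cases hi : (i:ℕ) = s
      · have hlast : i = Fin.last s := by
          apply Fin.ext; simpa using hi
        rw [hlast, Pi.single_eq_same]
        simp only [Fin.val_last]
        have hfull := altW s (s+2) (by omega)
        rw [Finset.sum_range_succ] at hfull
        have hw : wz s (s+1) = 1 := by
          unfold wz
          rw [mt_eq_zero (show s < s+1 by omega), mt_diag (s+1)]
          norm_num
        rw [hw] at hfull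
        have : ∑ k ∈ Finset.range (s+1), wz s k * ((-1:ℤ)^k * ((k:ℤ)+1))
            = -(1 * ((-1:ℤ)^(s+1) * ((s:ℤ)+1+1))) := by push_cast at hfull ⊢; linarith
        rw [this]
        push_cast
        ring
      · have hne : i ≠ Fin.last s := by
          intro hcon; apply hi; rw [hcon]; simp
        rw [Pi.single_eq_of_ne hne]
        have : (i:ℕ) + 2 ≤ s + 1 := by
          have := i.isLt
          omega
        exact altW i (s+1) this
    -- evaluate cramer A (A.mulVec u) at last, two ways
    have hAmu : A.mulVec u = ∑ k : Fin (s+1), u k • (fun j => A j k) := by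
      funext i
      rw [Matrix.mulVec]
      show ∑ k, A i k * u k = _
      rw [Finset.sum_apply]
      apply Finset.sum_congr rfl
      intro k _
      simp [mul_comm]
    have hc1 : Matrix.cramer A (A.mulVec u) = ∑ k : Fin (s+1), u k • Pi.single k A.det := by
      rw [hAmu, map_sum]
      apply Finset.sum_congr rfl
      intro k _
      rw [LinearMap.map_smul]
      congr 1
      exact Matrix.cramer_row_self A (fun j => A j k) k (fun j => rfl)
    have hc1' : Matrix.cramer A (A.mulVec u) (Fin.last s) = u (Fin.last s) * A.det := by
      rw [hc1, Finset.sum_apply]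
      rw [Finset.sum_eq_single (Fin.last s)]
      · simp
      · intro k _ hk
        rw [Pi.smul_apply, Pi.single_eq_of_ne (Ne.symm hk), smul_zero]
      · intro h; simp at h
    have hc2 : Matrix.cramer A (A.mulVec u) (Fin.last s)
        = ((-1:ℤ)^s * ((s:ℤ)+2)) * (Hmat s).det := by
      rw [hmv]
      have hsingle : (Pi.single (Fin.last s) ((-1:ℤ)^s * ((s:ℤ)+2)) : Fin (s+1) → ℤ)
          = ((-1:ℤ)^s * ((s:ℤ)+2)) • Pi.single (Fin.last s) (1:ℤ) := by
        funext j
        by_cases hj : j = Fin.last s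
        · subst hj; simp
        · simp [Pi.single_eq_of_ne hj]
      rw [hsingle, LinearMap.map_smul, Pi.smul_apply, smul_eq_mul]
      congr 1
      rw [Matrix.cramer_apply]
      set M := A.updateCol (Fin.last s) (Pi.single (Fin.last s) (1:ℤ)) with hM
      rw [Matrix.det_succ_column M (Fin.last s)]
      rw [Finset.sum_eq_single (Fin.last s)]
      · have hentry : M (Fin.last s) (Fin.last s) = 1 := by
          rw [hM, Matrix.updateCol_self, Pi.single_eq_same]
        rw [hentry]
        have hsub : M.submatrix (Fin.last s).succAbove (Fin.last s).succAbove = Hmat s := by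
          apply Matrix.ext
          intro p q
          rw [Fin.succAbove_last, Matrix.submatrix_apply]
          rw [hM, Matrix.updateCol_ne (Fin.castSucc_lt_last q).ne]
          show wz (p.castSucc : ℕ) (q.castSucc : ℕ) = Hmat s p q
          rw [Fin.coe_castSucc, Fin.coe_castSucc]
          rfl
        rw [hsub]
        have hpow : (-1:ℤ)^(((Fin.last s) : ℕ) + ((Fin.last s) : ℕ)) = 1 := by
          rw [Fin.val_last]
          have : s + s = 2*s := by omega
          rw [this, pow_mul]
          norm_num
        rw [hpow]
        ring
      · intro i _ hi
        have : M i (Fin.last s) = 0 := by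
          rw [hM, Matrix.updateCol_self, Pi.single_eq_of_ne hi]
        rw [this]
        ring
      · intro h; simp at h
    have hulast : u (Fin.last s) = (-1:ℤ)^s * ((s:ℤ)+1) := by
      show (-1:ℤ)^((Fin.last s : ℕ)) * (((Fin.last s : ℕ):ℤ)+1) = _
      rw [Fin.val_last]
    have heq : ((-1:ℤ)^s * ((s:ℤ)+1)) * A.det = ((-1:ℤ)^s * ((s:ℤ)+2)) * ((s:ℤ)+1) := by
      rw [← hulast, ← hc1', hc2, ih]
    have hcancel : ((-1:ℤ)^s) * (((s:ℤ)+1) * A.det)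
        = ((-1:ℤ)^s) * (((s:ℤ)+2) * ((s:ℤ)+1)) := by linear_combination heq
    have h2 := mul_left_cancel₀ (pow_ne_zero s (by norm_num : (-1:ℤ) ≠ 0)) hcancel
    have h3 : A.det = (s:ℤ)+2 := by
      have hne : ((s:ℤ)+1) ≠ 0 := by positivity
      have := mul_left_cancel₀ hne (by linear_combination h2 :
        ((s:ℤ)+1) * A.det = ((s:ℤ)+1) * ((s:ℤ)+2))
      exact this
    rw [← hA] at *
    rw [h3]
    push_cast
    ring

lemma W_sum' (i j N : ℕ) (hN : i+2 ≤ N) :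
    ∑ k ∈ Finset.range N, wz i k * wz j k
      = (motzkin (i+j) : ℤ) + 2 * (motzkin (i+j+1) : ℤ) + (motzkin (i+j+2) : ℤ) := by
  have hv : ∀ k, i+2 ≤ k → wz i k * wz j k = 0 := by
    intro k hk
    rw [wz_eq_zero (show i+1 < k by omega), zero_mul]
  rw [sum_drop hN hv, ← sum_drop (show i+2 ≤ i+j+3 by omega) hv, W_sum i j (i+j+3) (le_refl _)]

/-- The Hankel matrix of the theorem. -/
def Amat (n : ℕ) : Matrix (Fin n) (Fin n) ℤ := Matrix.of fun i j =>
  (motzkin ((i:ℕ)+(j:ℕ)) : ℤ) + 2*(motzkin ((i:ℕ)+(j:ℕ)+1):ℤ) + (motzkin ((i:ℕ)+(j:ℕ)+2):ℤ)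

/-- `wz` extended to a square matrix with an extra unit row. -/
def What (n : ℕ) : Matrix (Fin (n+1)) (Fin (n+1)) ℤ := Matrix.of fun i k =>
  if (i:ℕ) = n then (if (k:ℕ) = n then 1 else 0) else wz i k

lemma detWhat (n : ℕ) : (What n).det = (n:ℤ)+1 := by
  rw [Matrix.det_succ_row (What n) (Fin.last n)]
  rw [Finset.sum_eq_single (Fin.last n)]
  · have hentry : What n (Fin.last n) (Fin.last n) = 1 := by
      simp [What, Fin.val_last]
    rw [hentry]
    have hsub : (What n).submatrix (Fin.last n).succAbove (Fin.last n).succAbove = Hmat n := by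
      apply Matrix.ext
      intro p q
      rw [Fin.succAbove_last, Matrix.submatrix_apply]
      have hp : ((p.castSucc : Fin (n+1)) : ℕ) ≠ n := by
        rw [Fin.coe_castSucc]; omega
      simp only [What, Matrix.of_apply, Fin.coe_castSucc]
      rw [if_neg (show ¬((p:ℕ) = n) by omega)]
      rfl
    rw [hsub, detH n]
    have hpow : (-1:ℤ)^(((Fin.last n) : ℕ) + ((Fin.last n) : ℕ)) = 1 := by
      rw [Fin.val_last, (show n + n = 2*n by omega), pow_mul]
      norm_num
    rw [hpow]
    ring
  · intro j _ hj
    have : What n (Fin.last n) j = 0 := by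
      have hj' : (j:ℕ) ≠ n := by
        intro hc; apply hj; apply Fin.ext; simpa using hc
      simp [What, Fin.val_last, hj']
    rw [this]
    ring
  · intro h; simp at h

/-- entry function of `What` as a function on ℕ. -/
def whatf (m a b : ℕ) : ℤ := if a = m then (if b = m then 1 else 0) else wz a b

lemma what_apply (m : ℕ) (x y : Fin (m+1)) : What m x y = whatf m x y := rfl

lemma detM (n : ℕ) :
    ((What (n+1)) * (What (n+1)).transpose).det = (Amat (n+1)).det - (Amat n).det := by
  set B : Matrix (Fin (n+1)) (Fin 1) ℤ := Matrix.of (fun i _ => if (i:ℕ) = n then (1:ℤ) else 0)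
    with hB
  set C : Matrix (Fin 1) (Fin (n+1)) ℤ := Matrix.of (fun _ j => if (j:ℕ) = n then (1:ℤ) else 0)
    with hC
  have hwz_last : ∀ x : ℕ, x < n+1 → wz x (n+1) = (if x = n then 1 else 0) := by
    intro x hx
    unfold wz
    rw [mt_eq_zero (show x < n+1 by omega)]
    by_cases hxm : x = n
    · subst hxm; rw [mt_diag]; norm_num
    · rw [mt_eq_zero (show x+1 < n+1 by omega)]; simp [hxm]
  have hMentry : ∀ x y : Fin (n+2), ((What (n+1)) * (What (n+1)).transpose) x y
      = ∑ k ∈ Finset.range (n+2), whatf (n+1) x k * whatf (n+1) y k := by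
    intro x y
    rw [Matrix.mul_apply]
    rw [← Fin.sum_univ_eq_sum_range (fun k => whatf (n+1) x k * whatf (n+1) y k) (n+2)]
    apply Finset.sum_congr rfl
    intro k _
    rw [Matrix.transpose_apply, what_apply, what_apply]
  have hent1 : ∀ x y : Fin (n+2), (x:ℕ) < n+1 → (y:ℕ) < n+1 →
      ((What (n+1)) * (What (n+1)).transpose) x y
        = (motzkin ((x:ℕ)+(y:ℕ)) : ℤ) + 2*(motzkin ((x:ℕ)+(y:ℕ)+1):ℤ)
          + (motzkin ((x:ℕ)+(y:ℕ)+2):ℤ) := by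
    intro x y hx hy
    rw [hMentry x y]
    have hstep : ∀ k, whatf (n+1) x k * whatf (n+1) y k = wz x k * wz y k := by
      intro k
      unfold whatf
      rw [if_neg (show ¬((x:ℕ) = n+1) by omega), if_neg (show ¬((y:ℕ) = n+1) by omega)]
    rw [Finset.sum_congr rfl (fun k _ => hstep k)]
    exact W_sum' x y (n+2) (by omega)
  have hent2 : ∀ x y : Fin (n+2), (x:ℕ) = n+1 → (y:ℕ) < n+1 →
      ((What (n+1)) * (What (n+1)).transpose) x y = (if (y:ℕ) = n then 1 else 0) := by
    intro x y hx hy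
    rw [hMentry x y]
    have hstep : ∀ k, whatf (n+1) x k * whatf (n+1) y k
        = (if k = n+1 then 1 else 0) * wz y k := by
      intro k
      unfold whatf
      rw [if_pos hx, if_neg (show ¬((y:ℕ) = n+1) by omega)]
    rw [Finset.sum_congr rfl (fun k _ => hstep k)]
    rw [Finset.sum_eq_single (n+1)]
    · rw [if_pos rfl, one_mul, hwz_last y (by omega)]
    · intro k _ hk; rw [if_neg hk, zero_mul]
    · intro h; simp at h
  have hent3 : ∀ x y : Fin (n+2), (x:ℕ) < n+1 → (y:ℕ) = n+1 →
      ((What (n+1)) * (What (n+1)).transpose) x y = (if (x:ℕ) = n then 1 else 0) := by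
    intro x y hx hy
    rw [hMentry x y]
    have hstep : ∀ k, whatf (n+1) x k * whatf (n+1) y k
        = wz x k * (if k = n+1 then 1 else 0) := by
      intro k
      unfold whatf
      rw [if_pos hy, if_neg (show ¬((x:ℕ) = n+1) by omega)]
    rw [Finset.sum_congr rfl (fun k _ => hstep k)]
    rw [Finset.sum_eq_single (n+1)]
    · rw [if_pos rfl, mul_one, hwz_last x (by omega)]
    · intro k _ hk; rw [if_neg hk, mul_zero]
    · intro h; simp at h
  have hent4 : ∀ x y : Fin (n+2), (x:ℕ) = n+1 → (y:ℕ) = n+1 →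
      ((What (n+1)) * (What (n+1)).transpose) x y = 1 := by
    intro x y hx hy
    rw [hMentry x y]
    have hstep : ∀ k, whatf (n+1) x k * whatf (n+1) y k
        = (if k = n+1 then 1 else 0) := by
      intro k
      unfold whatf
      rw [if_pos hx, if_pos hy]
      by_cases hk : k = n+1 <;> simp [hk]
    rw [Finset.sum_congr rfl (fun k _ => hstep k)]
    rw [Finset.sum_eq_single (n+1)]
    · rw [if_pos rfl]
    · intro k _ hk; rw [if_neg hk]
    · intro h; simp at h
  have hblocks : (((What (n+1)) * (What (n+1)).transpose).submatrix finSumFinEquiv finSumFinEquiv)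
      = Matrix.fromBlocks (Amat (n+1)) B C (1 : Matrix (Fin 1) (Fin 1) ℤ) := by
    apply Matrix.ext
    intro i j
    cases i with
    | inl i =>
      cases j with
      | inl j =>
        rw [Matrix.submatrix_apply]
        rw [finSumFinEquiv_apply_left]
        rw [finSumFinEquiv_apply_left]
        rw [hent1 _ _ (by rw [Fin.coe_castAdd]; omega) (by rw [Fin.coe_castAdd]; omega)]
        simp only [Matrix.fromBlocks_apply₁₁, Fin.coe_castAdd]
        rfl
      | inr j =>
        rw [Matrix.submatrix_apply]
        rw [finSumFinEquiv_apply_left]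
        rw [finSumFinEquiv_apply_right]
        rw [hent3 _ _ (by rw [Fin.coe_castAdd]; omega)
          (by rw [Fin.coe_natAdd]; omega)]
        simp only [Matrix.fromBlocks_apply₁₂, Fin.coe_castAdd, hB, Matrix.of_apply]
    | inr i =>
      cases j with
      | inl j =>
        rw [Matrix.submatrix_apply]
        rw [finSumFinEquiv_apply_right]
        rw [finSumFinEquiv_apply_left]
        rw [hent2 _ _ (by rw [Fin.coe_natAdd]; omega) (by rw [Fin.coe_castAdd]; omega)]
        simp only [Matrix.fromBlocks_apply₂₁, Fin.coe_castAdd, hC, Matrix.of_apply]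
      | inr j =>
        rw [Matrix.submatrix_apply]
        rw [finSumFinEquiv_apply_right]
        rw [finSumFinEquiv_apply_right]
        rw [hent4 _ _ (by rw [Fin.coe_natAdd]; omega) (by rw [Fin.coe_natAdd]; omega)]
        have hi0 : i = 0 := Subsingleton.elim i 0
        have hj0 : j = 0 := Subsingleton.elim j 0
        subst hi0; subst hj0
        simp [Matrix.fromBlocks_apply₂₂, Matrix.one_apply]
  have hdet1 : ((What (n+1)) * (What (n+1)).transpose).det
      = (Matrix.fromBlocks (Amat (n+1)) B C (1 : Matrix (Fin 1) (Fin 1) ℤ)).det := by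
    rw [← hblocks, Matrix.det_submatrix_equiv_self]
  rw [hdet1, Matrix.det_fromBlocks_one₂₂]
  have hBC : B * C = Matrix.of (fun i j : Fin (n+1) =>
      if (i:ℕ) = n ∧ (j:ℕ) = n then (1:ℤ) else 0) := by
    apply Matrix.ext
    intro i j
    rw [Matrix.mul_apply]
    rw [Finset.sum_eq_single (0 : Fin 1)]
    · simp only [hB, hC, Matrix.of_apply]
      by_cases hi : (i:ℕ) = n <;> by_cases hj : (j:ℕ) = n <;> simp [hi, hj]
    · intro k _ hk; exact absurd (Subsingleton.elim k 0) hk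
    · intro h; simp at h
  rw [hBC]
  set A2 := Amat (n+1) with hA2
  have hsub : A2 - Matrix.of (fun i j : Fin (n+1) =>
      if (i:ℕ) = n ∧ (j:ℕ) = n then (1:ℤ) else 0)
      = A2.updateRow (Fin.last n) (A2 (Fin.last n) + (-1 : ℤ) • Pi.single (Fin.last n) 1) := by
    apply Matrix.ext
    intro i j
    by_cases hi : i = Fin.last n
    · subst hi
      rw [Matrix.updateRow_self]
      by_cases hj : j = Fin.last n
      · subst hj
        simp [Fin.val_last, Pi.single_eq_same, Matrix.sub_apply]
        ring
      · have hj' : (j:ℕ) ≠ n := fun hc => hj (Fin.ext (by simpa using hc))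
        simp [Fin.val_last, hj', Pi.single_eq_of_ne hj, Matrix.sub_apply]
    · rw [Matrix.updateRow_ne hi]
      have hi' : (i:ℕ) ≠ n := fun hc => hi (Fin.ext (by simpa using hc))
      simp [hi', Matrix.sub_apply]
  rw [hsub, Matrix.det_updateRow_add, Matrix.updateRow_eq_self, Matrix.det_updateRow_smul]
  have hlastdet : (A2.updateRow (Fin.last n) (Pi.single (Fin.last n) 1)).det
      = (Amat n).det := by
    set N := A2.updateRow (Fin.last n) (Pi.single (Fin.last n) (1:ℤ)) with hN
    rw [Matrix.det_succ_row N (Fin.last n)]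
    rw [Finset.sum_eq_single (Fin.last n)]
    · have hentry : N (Fin.last n) (Fin.last n) = 1 := by
        rw [hN, Matrix.updateRow_self, Pi.single_eq_same]
      rw [hentry]
      have hsubm : N.submatrix (Fin.last n).succAbove (Fin.last n).succAbove = Amat n := by
        apply Matrix.ext
        intro p q
        rw [Fin.succAbove_last, Matrix.submatrix_apply]
        rw [hN, Matrix.updateRow_ne (Fin.castSucc_lt_last p).ne]
        show Amat (n+1) p.castSucc q.castSucc = Amat n p q
        simp only [Amat, Matrix.of_apply, Fin.coe_castSucc]
      rw [hsubm]
      have hpow : (-1:ℤ)^(((Fin.last n) : ℕ) + ((Fin.last n) : ℕ)) = 1 := by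
        rw [Fin.val_last, (show n + n = 2*n by omega), pow_mul]
        norm_num
      rw [hpow]
      ring
    · intro j _ hj
      have : N (Fin.last n) j = 0 := by
        rw [hN, Matrix.updateRow_self, Pi.single_eq_of_ne hj]
      rw [this]
      ring
    · intro h; simp at h
  rw [hlastdet]
  ring

lemma detA : ∀ n : ℕ, (Amat n).det = ∑ j ∈ Finset.range (n+1), ((j:ℤ)+1)^2 := by
  intro n
  induction n with
  | zero =>
    have : (Amat 0).det = 1 := Matrix.det_fin_zero
    rw [this]
    norm_num
  | succ n ih =>
    have h1 := detM n
    have h2 : ((What (n+1)) * (What (n+1)).transpose).det = ((n:ℤ)+2)^2 := by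
      rw [Matrix.det_mul, Matrix.det_transpose, detWhat (n+1)]
      push_cast; ring
    rw [Finset.sum_range_succ, ← ih]
    push_cast
    linear_combination h2 - h1 + ih - ih

lemma sum_sq (n : ℕ) : 6 * ∑ j ∈ Finset.range (n+1), ((j:ℤ)+1)^2
    = ((n:ℤ)+1)*((n:ℤ)+2)*(2*(n:ℤ)+3) := by
  induction n with
  | zero => norm_num
  | succ n ih =>
    rw [Finset.sum_range_succ]
    push_cast at ih ⊢
    linear_combination ih

/-- Eq. (4.18): for `n ≥ 1`,
`det(M_{i+j} + 2M_{i+j+1} + M_{i+j+2})_{i,j=0}^{n-1} = ∑_{j=0}^{n} (j+1)²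
  = (n+1)(n+2)(2n+3)/6`. -/
theorem hankel_motzkin_three_term (n : ℕ) (hn : 0 < n) :
    Matrix.det (Matrix.of fun i j : Fin n =>
          (motzkin ((i : ℕ) + (j : ℕ)) : ℤ)
            + 2 * (motzkin ((i : ℕ) + (j : ℕ) + 1) : ℤ)
            + (motzkin ((i : ℕ) + (j : ℕ) + 2) : ℤ))
        = ∑ j ∈ Finset.range (n + 1), ((j : ℤ) + 1) ^ 2
      ∧ 6 * Matrix.det (Matrix.of fun i j : Fin n =>
          (motzkin ((i : ℕ) + (j : ℕ)) : ℤ)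
            + 2 * (motzkin ((i : ℕ) + (j : ℕ) + 1) : ℤ)
            + (motzkin ((i : ℕ) + (j : ℕ) + 2) : ℤ))
        = ((n : ℤ) + 1) * ((n : ℤ) + 2) * (2 * (n : ℤ) + 3) := by
  have hd : Matrix.det (Matrix.of fun i j : Fin n =>
          (motzkin ((i : ℕ) + (j : ℕ)) : ℤ)
            + 2 * (motzkin ((i : ℕ) + (j : ℕ) + 1) : ℤ)
            + (motzkin ((i : ℕ) + (j : ℕ) + 2) : ℤ)) = (Amat n).det := by
    congr 1
  constructor
  · rw [hd, detA n]
  · rw [hd, detA n, sum_sq n]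
end
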